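/- arXiv:2104.14334 — 3 statements merged into one kernel-verified Lean document; each statement's English description precedes it below -/
import Mathlib

section
/- Let (λⁿ)_{n≥1} ⊂ Λ and λ ∈ Λ be such that for every m ≥ 1, every finite Borel partition {A₁, …, A_m} of [0,T], and all bounded continuous functions g₁, …, g_m : U → ℝ, one has ∫ Σ_{l=1}^m 1_{A_l}(t) g_l(u) λⁿ(dt,du) → ∫ Σ_{l=1}^m 1_{A_l}(t) g_l(u) λ(dt,du) as n → ∞. Then (λⁿ) converges stably to λ: for every bounded f : [0,T] × U → ℝ that is Borel measurable in t for each u and continuous in u for each t, ∫ f dλⁿ → ∫ f dλ. -/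
/-!
Write `f (t, u) = F t u` with `F : [0,T] → C(U, ℝ)`. The space `C(U, ℝ)` is separable and `F` is
Borel measurable: the preimage of a closed ball is an intersection over a countable dense subset
of `U`. Hence `F` is approximated in `L¹(ν)` by simple functions `φ`, where `ν` is the first
marginal shared by all measures of `Λ` (it is fixed by `λ([0,t] × U) = t`). A simple function
`φ` is a test function `Σ 1_{A_l}(t) g_l(u)`, and for every `μ` with first marginal `ν`,
`|∫ f dμ - ∫ φ dμ| ≤ ∫ ‖F t - φ t‖ dν(t)`: the error bound depends on `t` only, so it is the
same for all `λⁿ` and for `λ`, and an `ε/3` argument concludes.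
-/

open MeasureTheory Filter Topology Metric TopologicalSpace Set

theorem tendsto_of_forall_approx {α ι : Type*} [PseudoMetricSpace α] {l : Filter ι}
    {a : ι → α} {b : α}
    (h : ∀ ε > 0, ∃ (c : ι → α) (d : α), Tendsto c l (𝓝 d) ∧ (∀ i, dist (a i) (c i) ≤ ε) ∧
      dist b d ≤ ε) :
    Tendsto a l (𝓝 b) := by
  refine Metric.tendsto_nhds.2 fun ε hε => ?_
  obtain ⟨c, d, hcd, hac, hbd⟩ := h (ε / 4) (by positivity)
  filter_upwards [Metric.tendsto_nhds.1 hcd (ε / 4) (by positivity)] with i hi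
  calc dist (a i) b ≤ dist (a i) (c i) + dist (c i) d + dist d b := dist_triangle4 _ _ _ _
    _ < ε := by rw [dist_comm d]; linarith [hac i]

theorem measurable_of_measurableSet_preimage_closedBall {X E : Type*} [MeasurableSpace X]
    [PseudoMetricSpace E] [SecondCountableTopology E] [MeasurableSpace E] [BorelSpace E] {F : X → E}
    (hF : ∀ c r, MeasurableSet (F ⁻¹' closedBall c r)) : Measurable F := by
  refine measurable_of_isClosed fun s hs => ?_
  obtain ⟨D, hDs, hDc, hsD⟩ := (IsSeparable.of_separableSpace s).exists_countable_dense_subset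
  have hpre : F ⁻¹' s = ⋂ k : ℕ, ⋃ c ∈ D, F ⁻¹' closedBall c (1 / (k + 1)) := by
    ext x
    simp only [mem_preimage, mem_iInter, mem_iUnion, mem_closedBall, exists_prop]
    constructor
    · intro hx k
      obtain ⟨c, hcD, hc⟩ := Metric.mem_closure_iff.1 (hsD hx) _ Nat.one_div_pos_of_nat
      exact ⟨c, hcD, hc.le⟩
    · intro h
      refine hs.closure_subset_iff.2 hDs (Metric.mem_closure_iff.2 fun ε hε => ?_)
      obtain ⟨k, hk⟩ := exists_nat_one_div_lt hε
      obtain ⟨c, hcD, hc⟩ := h k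
      exact ⟨c, hcD, hc.trans_lt hk⟩
  rw [hpre]
  exact .iInter fun k => .biUnion hDc fun c _ => hF c _

theorem MeasureTheory.SimpleFunc.exists_fin_partition {X M : Type*} [MeasurableSpace X]
    [AddCommMonoid M] (φ : SimpleFunc X M) :
    ∃ m, 1 ≤ m ∧ ∃ (A : Fin m → Set X) (c : Fin m → M), (∀ l, MeasurableSet (A l)) ∧
      (Pairwise fun l l' => Disjoint (A l) (A l')) ∧ (⋃ l, A l) = univ ∧
      ∀ x, ∑ l, (A l).indicator (fun _ => c l) x = φ x := by
  classical
  -- `0` is added so that the partition is nonempty even when `X` is empty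
  set s := insert 0 φ.range
  let e : Fin s.card ≃ s := s.equivFin.symm
  refine ⟨s.card, Finset.card_pos.2 (Finset.insert_nonempty _ _), fun l => φ ⁻¹' {(e l : M)},
    fun l => e l, fun l => φ.measurableSet_preimage _, fun l l' hll' => ?_, ?_, fun x => ?_⟩
  · exact (Set.disjoint_singleton.2 fun h => hll' (e.injective (Subtype.ext h))).preimage φ
  · refine eq_univ_of_forall fun x => mem_iUnion.2 ⟨e.symm ⟨φ x, ?_⟩, by simp⟩
    exact Finset.mem_insert_of_mem (φ.mem_range_self x)
  · simp only [Set.indicator_apply, mem_preimage, mem_singleton_iff]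
    rw [e.sum_comp (fun c : s => if φ x = c then (c : M) else 0),
      Finset.sum_coe_sort s (fun c => if φ x = c then c else 0), Finset.sum_ite_eq]
    simp [s, φ.mem_range_self x]

section ContinuousMapValued

variable {X Y : Type*} [MeasurableSpace X] [TopologicalSpace Y] [CompactSpace Y]

theorem tendsto_integral_simpleFunc_of_tendsto_integral_partition [MeasurableSpace Y]
    {μs : ℕ → Measure (X × Y)} {μ : Measure (X × Y)}
    (hsimple : ∀ m : ℕ, 1 ≤ m → ∀ A : Fin m → Set X, (∀ l, MeasurableSet (A l)) →
      (Pairwise fun l l' => Disjoint (A l) (A l')) → (⋃ l, A l) = univ →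
      ∀ g : Fin m → Y → ℝ, (∀ l, Continuous (g l)) → (∀ l, ∃ C, ∀ u, |g l u| ≤ C) →
        Tendsto (fun n => ∫ p, ∑ l, (A l).indicator (fun _ => g l p.2) p.1 ∂(μs n)) atTop
          (𝓝 (∫ p, ∑ l, (A l).indicator (fun _ => g l p.2) p.1 ∂μ)))
    (φ : SimpleFunc X C(Y, ℝ)) :
    Tendsto (fun n => ∫ p, φ p.1 p.2 ∂μs n) atTop (𝓝 (∫ p, φ p.1 p.2 ∂μ)) := by
  obtain ⟨m, hm, A, c, hA, hdisj, hcover, hsum⟩ := φ.exists_fin_partition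
  have hφ : (fun p : X × Y => φ p.1 p.2) =
      fun p => ∑ l, (A l).indicator (fun _ => c l p.2) p.1 := by
    funext p
    rw [← hsum p.1, ContinuousMap.sum_apply]
    refine Finset.sum_congr rfl fun l _ => ?_
    by_cases hp : p.1 ∈ A l <;> simp [hp]
  rw [hφ]
  exact hsimple m hm A hA hdisj hcover (fun l => c l) (fun l => (c l).continuous)
    fun l => ⟨‖c l‖, fun u => (c l).norm_coe_le_norm u⟩

variable [SecondCountableTopology Y] [MeasurableSpace C(Y, ℝ)] [BorelSpace C(Y, ℝ)]

theorem ContinuousMap.measurable_uncurry [MeasurableSpace Y] [OpensMeasurableSpace Y]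
    {F : X → C(Y, ℝ)} (hF : Measurable F) : Measurable fun p : X × Y => F p.1 p.2 :=
  continuous_eval.measurable.comp ((hF.comp measurable_fst).prodMk measurable_snd)

theorem ContinuousMap.integrable_uncurry [MeasurableSpace Y] [OpensMeasurableSpace Y]
    (μ : Measure (X × Y)) [IsFiniteMeasure μ] {F : X → C(Y, ℝ)} (hF : Measurable F)
    {C : ℝ} (hC : ∀ x, ‖F x‖ ≤ C) : Integrable (fun p : X × Y => F p.1 p.2) μ :=
  .of_bound (ContinuousMap.measurable_uncurry hF).aestronglyMeasurable C
    (.of_forall fun p => (ContinuousMap.norm_coe_le_norm _ _).trans (hC p.1))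

variable [T2Space Y]

theorem ContinuousMap.measurable_of_measurable_apply {F : X → C(Y, ℝ)}
    (hF : ∀ y, Measurable fun x => F x y) : Measurable F := by
  refine measurable_of_measurableSet_preimage_closedBall fun c r => ?_
  rcases lt_or_ge r 0 with hr | hr
  · simp [closedBall_eq_empty.2 hr]
  obtain ⟨D, hDc, hD⟩ := exists_countable_dense Y
  have hpre : F ⁻¹' closedBall c r = ⋂ y ∈ D, {x | dist (F x y) (c y) ≤ r} := by
    ext x
    simp only [mem_preimage, mem_closedBall, ContinuousMap.dist_le hr, mem_iInter, mem_ofPred_eq]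
    refine ⟨fun h y _ => h y, fun h y => ?_⟩
    have hclosed : IsClosed {y | dist (F x y) (c y) ≤ r} :=
      isClosed_le (by fun_prop) continuous_const
    exact hclosed.closure_subset_iff.2 h (hD.closure_eq ▸ mem_univ y)
  rw [hpre]
  exact .biInter hDc fun y _ => measurableSet_le ((hF y).dist measurable_const) measurable_const

theorem edist_integral_le_lintegral_edist [MeasurableSpace Y] [OpensMeasurableSpace Y]
    (μ : Measure (X × Y)) [IsFiniteMeasure μ] {F G : X → C(Y, ℝ)}
    (hF : Measurable F) (hG : Measurable G) {C D : ℝ} (hFC : ∀ x, ‖F x‖ ≤ C)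
    (hGD : ∀ x, ‖G x‖ ≤ D) :
    edist (∫ p, F p.1 p.2 ∂μ) (∫ p, G p.1 p.2 ∂μ) ≤ ∫⁻ x, edist (F x) (G x) ∂μ.map Prod.fst := by
  rw [lintegral_map (hF.edist hG) measurable_fst, edist_eq_enorm_sub,
    ← integral_sub (ContinuousMap.integrable_uncurry μ hF hFC)
      (ContinuousMap.integrable_uncurry μ hG hGD)]
  refine (enorm_integral_le_lintegral_enorm _).trans (lintegral_mono fun p => ?_)
  rw [← edist_eq_enorm_sub, ContinuousMap.edist_eq_iSup]
  exact le_iSup (fun y => edist (F p.1 y) (G p.1 y)) p.2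

theorem tendsto_integral_of_tendsto_integral_simpleFunc [MeasurableSpace Y]
    [OpensMeasurableSpace Y] {μs : ℕ → Measure (X × Y)} {μ : Measure (X × Y)}
    [∀ n, IsFiniteMeasure (μs n)] [IsFiniteMeasure μ]
    (hmarg : ∀ n, (μs n).map Prod.fst = μ.map Prod.fst)
    (hsimple : ∀ φ : SimpleFunc X C(Y, ℝ),
      Tendsto (fun n => ∫ p, φ p.1 p.2 ∂μs n) atTop (𝓝 (∫ p, φ p.1 p.2 ∂μ)))
    {F : X → C(Y, ℝ)} (hF : Measurable F) {C : ℝ} (hC : ∀ x, ‖F x‖ ≤ C) :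
    Tendsto (fun n => ∫ p, F p.1 p.2 ∂μs n) atTop (𝓝 (∫ p, F p.1 p.2 ∂μ)) := by
  refine tendsto_of_forall_approx fun ε hε => ?_
  have hF_memLp : MemLp F 1 (μ.map Prod.fst) := .of_bound hF.aestronglyMeasurable C (.of_forall hC)
  obtain ⟨φ, hφ, -⟩ := hF_memLp.exists_simpleFunc_eLpNorm_sub_lt ENNReal.one_ne_top
    (ENNReal.ofReal_pos.2 hε).ne'
  obtain ⟨D, hD⟩ := φ.exists_forall_norm_le
  have hclose (ρ : Measure (X × Y)) [IsFiniteMeasure ρ] (hρ : ρ.map Prod.fst = μ.map Prod.fst) :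
      dist (∫ p, F p.1 p.2 ∂ρ) (∫ p, φ p.1 p.2 ∂ρ) ≤ ε := by
    rw [← edist_le_ofReal hε.le]
    calc _ ≤ ∫⁻ x, edist (F x) (φ x) ∂ρ.map Prod.fst :=
          edist_integral_le_lintegral_edist ρ hF φ.measurable hC hD
      _ = eLpNorm (F - ⇑φ) 1 (μ.map Prod.fst) := by
          rw [hρ, eLpNorm_one_eq_lintegral_enorm]
          simp only [edist_eq_enorm_sub, Pi.sub_apply]
      _ ≤ _ := hφ.le
  exact ⟨_, _, hsimple φ, fun n => hclose _ (hmarg n), dist_comm (α := ℝ) _ _ ▸ hclose μ rfl⟩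

end ContinuousMapValued

section Lambda

variable {T : ℝ} {Y : Type*} [MeasurableSpace Y]

theorem isFiniteMeasure_of_measure_fst_le_eq (hT : 0 ≤ T) {μ : Measure (Icc (0:ℝ) T × Y)}
    (hμ : ∀ t ∈ Icc (0:ℝ) T, μ {p | (p.1 : ℝ) ≤ t} = ENNReal.ofReal t) : IsFiniteMeasure μ := by
  constructor
  have huniv : {p : Icc (0:ℝ) T × Y | (p.1 : ℝ) ≤ T} = univ := eq_univ_of_forall fun p => p.1.2.2
  rw [← huniv, hμ T ⟨hT, le_rfl⟩]
  exact ENNReal.ofReal_lt_top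

theorem map_fst_eq_of_measure_fst_le_eq {μ ν : Measure (Icc (0:ℝ) T × Y)} [IsFiniteMeasure μ]
    (hμ : ∀ t ∈ Icc (0:ℝ) T, μ {p | (p.1 : ℝ) ≤ t} = ENNReal.ofReal t)
    (hν : ∀ t ∈ Icc (0:ℝ) T, ν {p | (p.1 : ℝ) ≤ t} = ENNReal.ofReal t) :
    μ.map Prod.fst = ν.map Prod.fst := by
  refine Measure.ext_of_Iic _ _ fun a => ?_
  rw [Measure.map_apply measurable_fst measurableSet_Iic,
    Measure.map_apply measurable_fst measurableSet_Iic]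
  exact (hμ a a.2).trans (hν a a.2).symm

end Lambda

theorem simple_convergence_implies_stable_convergence_general
    (T : ℝ) (hT : 0 < T) (U : Set ℝ) (hU : IsCompact U)
    (lam : ℕ → Measure (↥(Set.Icc (0:ℝ) T) × ↥U))
    (lamLim : Measure (↥(Set.Icc (0:ℝ) T) × ↥U))
    -- `λⁿ ∈ Λ`
    (hlam : ∀ n, ∀ t ∈ Set.Icc (0:ℝ) T,
      lam n {p : ↥(Set.Icc (0:ℝ) T) × ↥U | (p.1 : ℝ) ≤ t} = ENNReal.ofReal t)
    -- `λ ∈ Λ`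
    (hlamLim : ∀ t ∈ Set.Icc (0:ℝ) T,
      lamLim {p : ↥(Set.Icc (0:ℝ) T) × ↥U | (p.1 : ℝ) ≤ t} = ENNReal.ofReal t)
    -- convergence of integrals of simple test functions
    (hsimple : ∀ m : ℕ, 1 ≤ m → ∀ A : Fin m → Set (↥(Set.Icc (0:ℝ) T)),
      (∀ l, MeasurableSet (A l)) →
      (Pairwise fun l l' => Disjoint (A l) (A l')) →
      (⋃ l, A l) = Set.univ →
      ∀ g : Fin m → ↥U → ℝ,
        (∀ l, Continuous (g l)) → (∀ l, ∃ C, ∀ u, |g l u| ≤ C) →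
        Tendsto
          (fun n => ∫ p, ∑ l, (A l).indicator (fun _ => g l p.2) p.1 ∂(lam n))
          atTop
          (𝓝 (∫ p, ∑ l, (A l).indicator (fun _ => g l p.2) p.1 ∂lamLim))) :
    -- stable convergence
    ∀ f : ↥(Set.Icc (0:ℝ) T) × ↥U → ℝ,
      (∃ C, ∀ p, |f p| ≤ C) →
      (∀ u : ↥U, Measurable fun t : ↥(Set.Icc (0:ℝ) T) => f (t, u)) →
      (∀ t : ↥(Set.Icc (0:ℝ) T), Continuous fun u : ↥U => f (t, u)) →
      Tendsto (fun n => ∫ p, f p ∂(lam n)) atTop (𝓝 (∫ p, f p ∂lamLim)) := by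
  rintro f ⟨C, hC⟩ hf_meas hf_cont
  have : CompactSpace U := isCompact_iff_compactSpace.mp hU
  have : ∀ n, IsFiniteMeasure (lam n) := fun n =>
    isFiniteMeasure_of_measure_fst_le_eq hT.le (hlam n)
  have : IsFiniteMeasure lamLim := isFiniteMeasure_of_measure_fst_le_eq hT.le hlamLim
  borelize C(U, ℝ)
  let F : Icc (0:ℝ) T → C(U, ℝ) := fun t => ⟨fun u => f (t, u), hf_cont t⟩
  have hF_bdd (t) : ‖F t‖ ≤ max C 0 :=
    (ContinuousMap.norm_le _ (le_max_right C 0)).2 fun u => (hC _).trans (le_max_left C 0)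
  exact tendsto_integral_of_tendsto_integral_simpleFunc
    (fun n => map_fst_eq_of_measure_fst_le_eq (hlam n) hlamLim)
    (tendsto_integral_simpleFunc_of_tendsto_integral_partition hsimple)
    (ContinuousMap.measurable_of_measurable_apply (F := F) hf_meas) hF_bdd

/-- If the integrals of all "simple" test functions `Σ_{l=1}^m 1_{A_l}(t) g_l(u)`
(with `{A_l}` a finite Borel partition of `[0,T]` and `g_l` bounded continuous on `U`)
converge along `(λⁿ)` to the corresponding integrals against `λ`, then `λⁿ → λ` stably:
`∫ f dλⁿ → ∫ f dλ` for every bounded `f` measurable in `t` and continuous in `u`. -/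
theorem simple_convergence_implies_stable_convergence
    (T : ℝ) (hT : 0 < T) (U : Set ℝ) (hU : IsCompact U) (hUne : U.Nonempty)
    (lam : ℕ → Measure (↥(Set.Icc (0:ℝ) T) × ↥U))
    (lamLim : Measure (↥(Set.Icc (0:ℝ) T) × ↥U))
    -- `λⁿ ∈ Λ`
    (hlam : ∀ n, ∀ t ∈ Set.Icc (0:ℝ) T,
      lam n {p : ↥(Set.Icc (0:ℝ) T) × ↥U | (p.1 : ℝ) ≤ t} = ENNReal.ofReal t)
    -- `λ ∈ Λ`
    (hlamLim : ∀ t ∈ Set.Icc (0:ℝ) T,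
      lamLim {p : ↥(Set.Icc (0:ℝ) T) × ↥U | (p.1 : ℝ) ≤ t} = ENNReal.ofReal t)
    -- convergence of integrals of simple test functions
    (hsimple : ∀ m : ℕ, 1 ≤ m → ∀ A : Fin m → Set (↥(Set.Icc (0:ℝ) T)),
      (∀ l, MeasurableSet (A l)) →
      (Pairwise fun l l' => Disjoint (A l) (A l')) →
      (⋃ l, A l) = Set.univ →
      ∀ g : Fin m → ↥U → ℝ,
        (∀ l, Continuous (g l)) → (∀ l, ∃ C, ∀ u, |g l u| ≤ C) →
        Tendsto
          (fun n => ∫ p, ∑ l, (A l).indicator (fun _ => g l p.2) p.1 ∂(lam n))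
          atTop
          (𝓝 (∫ p, ∑ l, (A l).indicator (fun _ => g l p.2) p.1 ∂lamLim))) :
    -- stable convergence
    ∀ f : ↥(Set.Icc (0:ℝ) T) × ↥U → ℝ,
      (∃ C, ∀ p, |f p| ≤ C) →
      (∀ u : ↥U, Measurable fun t : ↥(Set.Icc (0:ℝ) T) => f (t, u)) →
      (∀ t : ↥(Set.Icc (0:ℝ) T), Continuous fun u : ↥U => f (t, u)) →
      Tendsto (fun n => ∫ p, f p ∂(lam n)) atTop (𝓝 (∫ p, f p ∂lamLim)) :=
  simple_convergence_implies_stable_convergence_general T hT U hU lam lamLim hlam hlamLim hsimple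
end

section
/- Let U be a compact metric space and let f : [0,T] × U → ℝ be bounded, Borel measurable in t for each u ∈ U, and continuous in u for each t ∈ [0,T]. Then there exist continuous functions c₀, c₁, c₂, … ∈ C(U) with c₀ ≡ 0 and, for each m ≥ 0, a finite Borel partition D_{0,m}, …, D_{m,m} of [0,T] such that the functions f_m(t,u) := Σ_{l=0}^m 1_{D_{l,m}}(t) c_l(u) satisfy: (1) for every t ∈ [0,T], sup_{u∈U} |f(t,u) − f_m(t,u)| = min_{0≤k≤m} sup_{u∈U}|f(t,u) − c_k(u)| → 0 as m → ∞; and (2) sup_{u∈U}|f_m(t,u)| ≤ 2 sup_{u∈U}|f(t,u)| for all t ∈ [0,T] and m ≥ 0. -/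
/-!
Enumerate a dense sequence `c₁, c₂, …` of the separable space `C(U, ℝ)` after `c₀ = 0`, view
`f(t, ·)` as a point `F t` of `C(U, ℝ)`, and let `D_{l,m}` be the set of times at which `c_l` is
the first best approximation of `F t` among `c₀, …, c_m`. On `D_{l,m}` the function `f_m(t, ·)` is
`c_l`, which gives the minimum formula; density makes the minimum tend to `0`; and since `c_l`
is at least as close to `F t` as `c₀ = 0`, `‖c_l‖ ≤ 2 ‖F t‖`. The sets `D_{l,m}` are measurable
because `t ↦ ‖F t - c_k‖` is a supremum over a countable dense subset of `U` of measurable maps.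
-/

open MeasureTheory Filter Topology

theorem exists_denseRange_seq_zero (E : Type*) [TopologicalSpace E] [Zero E]
    [TopologicalSpace.SeparableSpace E] : ∃ c : ℕ → E, c 0 = 0 ∧ DenseRange c := by
  obtain ⟨d, hd⟩ := TopologicalSpace.exists_dense_seq E
  refine ⟨fun n => Nat.casesOn n 0 d, rfl, hd.mono ?_⟩
  rintro _ ⟨n, rfl⟩
  exact ⟨n + 1, rfl⟩

theorem DenseRange.tendsto_iInf_fin_dist {E : Type*} [PseudoMetricSpace E] {c : ℕ → E}
    (hc : DenseRange c) (x : E) :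
    Tendsto (fun m => ⨅ k : Fin (m + 1), dist x (c k)) atTop (𝓝 0) := by
  rw [Metric.tendsto_atTop]
  intro ε hε
  obtain ⟨n, hn⟩ := hc.exists_dist_lt x hε
  refine ⟨n, fun m hm => ?_⟩
  have h_nonneg : 0 ≤ ⨅ k : Fin (m + 1), dist x (c k) := le_ciInf fun _ => dist_nonneg
  rw [Real.dist_eq, sub_zero, abs_of_nonneg h_nonneg]
  calc ⨅ k : Fin (m + 1), dist x (c k)
      ≤ dist x (c (⟨n, Nat.lt_succ_of_le hm⟩ : Fin (m + 1))) :=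
        ciInf_le (Finite.bddBelow_range _) _
    _ < ε := hn

theorem norm_le_two_mul_of_dist_le {E : Type*} [SeminormedAddGroup E] {x y : E}
    (h : dist x y ≤ ‖x‖) : ‖y‖ ≤ 2 * ‖x‖ := by
  calc ‖y‖ = dist y 0 := (dist_zero_right y).symm
    _ ≤ dist x y + dist x 0 := dist_triangle_left _ _ _
    _ ≤ 2 * ‖x‖ := by rw [dist_zero_right]; linarith

theorem Finset.sum_indicator_apply_of_pairwise_disjoint {ι X M : Type*} [Fintype ι]
    [AddCommMonoid M] {D : ι → Set X} (hD : Pairwise fun i j => Disjoint (D i) (D j))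
    (a : ι → M) {i : ι} {t : X} (ht : t ∈ D i) :
    ∑ j, (D j).indicator (fun _ => a j) t = a i := by
  refine (Finset.sum_eq_single_of_mem i (Finset.mem_univ i) fun j _ hji => ?_).trans
    (Set.indicator_of_mem ht _)
  exact Set.indicator_of_notMem (Set.disjoint_right.mp (hD hji) ht) _

namespace ContinuousMap

variable {U : Type*} [TopologicalSpace U] [CompactSpace U]

theorem iSup_abs_eq_norm (φ : C(U, ℝ)) : ⨆ u, |φ u| = ‖φ‖ := by
  simp only [norm_eq_iSup_norm, Real.norm_eq_abs]

theorem isLUB_norm_comp_of_denseRange {E : Type*} [SeminormedAddCommGroup E] [Nonempty U]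
    {ι : Type*} [Nonempty ι] {s : ι → U} (hs : DenseRange s) (φ : C(U, E)) :
    IsLUB (Set.range fun i => ‖φ (s i)‖) ‖φ‖ := by
  refine ⟨?_, fun b hb => ?_⟩
  · rintro _ ⟨i, rfl⟩
    exact φ.norm_coe_le_norm _
  · rw [norm_le_of_nonempty]
    intro u
    exact hs.induction_on u (isClosed_le φ.continuous.norm continuous_const)
      fun i => hb ⟨i, rfl⟩

theorem measurable_norm_of_measurable_eval [TopologicalSpace.SeparableSpace U] [Nonempty U]
    {E : Type*} [NormedAddCommGroup E] [MeasurableSpace E] [OpensMeasurableSpace E]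
    {X : Type*} [MeasurableSpace X]
    {F : X → C(U, E)} (hF : ∀ u, Measurable fun t => F t u) : Measurable fun t => ‖F t‖ :=
  Measurable.isLUB (fun n => (hF (TopologicalSpace.denseSeq U n)).norm)
    fun t => isLUB_norm_comp_of_denseRange (TopologicalSpace.denseRange_denseSeq U) (F t)

end ContinuousMap

section LeastArgmin

variable {X α : Type*}

def leastArgminSet [LinearOrder α] (g : ℕ → X → α) (m : ℕ) (l : Fin (m + 1)) : Set X :=
  {t | (∀ j : Fin (m + 1), g l t ≤ g j t) ∧ ∀ j : Fin (m + 1), j < l → g l t < g j t}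

theorem pairwise_disjoint_leastArgminSet [LinearOrder α] (g : ℕ → X → α) (m : ℕ) :
    Pairwise fun l l' => Disjoint (leastArgminSet g m l) (leastArgminSet g m l') := by
  intro l l' hne
  refine Set.disjoint_left.mpr fun t ht ht' => ?_
  rcases hne.lt_or_gt with h | h
  · exact (ht'.2 l h).not_ge (ht.1 l')
  · exact (ht.2 l' h).not_ge (ht'.1 l)

theorem iUnion_leastArgminSet [LinearOrder α] (g : ℕ → X → α) (m : ℕ) :
    ⋃ l, leastArgminSet g m l = Set.univ := by
  classical
  refine Set.eq_univ_of_forall fun t => Set.mem_iUnion.mpr ?_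
  set S := Finset.univ.filter fun l : Fin (m + 1) => ∀ j : Fin (m + 1), g l t ≤ g j t
  have hS : S.Nonempty := by
    obtain ⟨l, -, hl⟩ := Finset.exists_min_image Finset.univ (fun j : Fin (m + 1) => g j t)
      Finset.univ_nonempty
    exact ⟨l, Finset.mem_filter.mpr ⟨Finset.mem_univ l, fun j => hl j (Finset.mem_univ j)⟩⟩
  have hmin := (Finset.mem_filter.mp (S.min'_mem hS)).2
  refine ⟨S.min' hS, hmin, fun j hj => lt_of_not_ge fun hle => ?_⟩
  have hjS : j ∈ S := Finset.mem_filter.mpr ⟨Finset.mem_univ j, fun i => hle.trans (hmin i)⟩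
  exact hj.not_ge (S.min'_le j hjS)

theorem measurableSet_leastArgminSet [LinearOrder α] [TopologicalSpace α] [OrderClosedTopology α]
    [SecondCountableTopology α] [MeasurableSpace α] [OpensMeasurableSpace α] [MeasurableSpace X]
    {g : ℕ → X → α} (hg : ∀ k, Measurable (g k)) (m : ℕ) (l : Fin (m + 1)) :
    MeasurableSet (leastArgminSet g m l) := by
  unfold leastArgminSet
  measurability

theorem iInf_eq_of_mem_leastArgminSet [ConditionallyCompleteLinearOrder α] {g : ℕ → X → α}
    {m : ℕ} {l : Fin (m + 1)} {t : X} (ht : t ∈ leastArgminSet g m l) :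
    ⨅ j : Fin (m + 1), g j t = g l t :=
  le_antisymm (ciInf_le (Finite.bddBelow_range _) l) (le_ciInf ht.1)

end LeastArgmin

theorem caratheodory_piecewise_approximation_general
    (T : ℝ)
    (U : Type*) [MetricSpace U] [CompactSpace U] [Nonempty U]
    (f : ↥(Set.Icc (0:ℝ) T) × U → ℝ)
    (hmeas : ∀ u : U, Measurable fun t : ↥(Set.Icc (0:ℝ) T) => f (t, u))
    (hcont : ∀ t : ↥(Set.Icc (0:ℝ) T), Continuous fun u : U => f (t, u)) :
    ∃ c : ℕ → C(U, ℝ), c 0 = 0 ∧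
      ∃ D : (m : ℕ) → Fin (m + 1) → Set (↥(Set.Icc (0:ℝ) T)),
        (∀ m l, MeasurableSet (D m l)) ∧
        (∀ m, Pairwise fun l l' => Disjoint (D m l) (D m l')) ∧
        (∀ m, (⋃ l, D m l) = Set.univ) ∧
        -- (1) the sup-distance to `f_m` realizes the minimum over `k ≤ m` ...
        (∀ m, ∀ t : ↥(Set.Icc (0:ℝ) T),
          (⨆ u : U, |f (t, u) - ∑ l : Fin (m + 1),
              (D m l).indicator (fun _ => c (l : ℕ) u) t|)
            = ⨅ k : Fin (m + 1), ⨆ u : U, |f (t, u) - c (k : ℕ) u|) ∧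
        -- ... and tends to `0` as `m → ∞`, for every `t`
        (∀ t : ↥(Set.Icc (0:ℝ) T),
          Tendsto (fun m => ⨆ u : U, |f (t, u) - ∑ l : Fin (m + 1),
              (D m l).indicator (fun _ => c (l : ℕ) u) t|) atTop (𝓝 0)) ∧
        -- (2) uniform bound
        (∀ m, ∀ t : ↥(Set.Icc (0:ℝ) T),
          (⨆ u : U, |∑ l : Fin (m + 1), (D m l).indicator (fun _ => c (l : ℕ) u) t|)
            ≤ 2 * ⨆ u : U, |f (t, u)|) := by
  obtain ⟨c, hc0, hc⟩ := exists_denseRange_seq_zero C(U, ℝ)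
  let F (t : Set.Icc (0:ℝ) T) : C(U, ℝ) := ⟨fun u => f (t, u), hcont t⟩
  let g (k : ℕ) (t : Set.Icc (0:ℝ) T) : ℝ := dist (F t) (c k)
  have hg (k : ℕ) : Measurable (g k) := by
    simp only [g, dist_eq_norm]
    exact ContinuousMap.measurable_norm_of_measurable_eval fun u => (hmeas u).sub_const _
  have hdist (h : C(U, ℝ)) (t) : ⨆ u, |f (t, u) - h u| = dist (F t) h := by
    rw [dist_eq_norm, ← ContinuousMap.iSup_abs_eq_norm]; rfl
  have hsum (m t) (l : Fin (m + 1)) (ht : t ∈ leastArgminSet g m l) (u : U) :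
      ∑ j : Fin (m + 1), (leastArgminSet g m j).indicator (fun _ => c j u) t = c l u :=
    Finset.sum_indicator_apply_of_pairwise_disjoint (pairwise_disjoint_leastArgminSet g m) _ ht
  have hbest (m t) : ∃ l, t ∈ leastArgminSet g m l :=
    Set.mem_iUnion.mp (iUnion_leastArgminSet g m ▸ Set.mem_univ t)
  have hmin (m t) : ⨆ u, |f (t, u) - ∑ l : Fin (m + 1),
      (leastArgminSet g m l).indicator (fun _ => c l u) t| =
        ⨅ k : Fin (m + 1), ⨆ u, |f (t, u) - c k u| := by
    obtain ⟨l, ht⟩ := hbest m t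
    simp only [hsum m t l ht, hdist]
    exact (iInf_eq_of_mem_leastArgminSet ht).symm
  refine ⟨c, hc0, leastArgminSet g, measurableSet_leastArgminSet hg,
    pairwise_disjoint_leastArgminSet g, iUnion_leastArgminSet g, hmin, fun t => ?_,
    fun m t => ?_⟩
  · simpa only [hmin, hdist] using hc.tendsto_iInf_fin_dist (F t)
  · obtain ⟨l, ht⟩ := hbest m t
    have hl : dist (F t) (c l) ≤ ‖F t‖ := by simpa [g, hc0] using ht.1 0
    simp only [hsum m t l ht, ContinuousMap.iSup_abs_eq_norm]
    exact (F t).iSup_abs_eq_norm ▸ norm_le_two_mul_of_dist_le hl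

/-- Approximation of a bounded Carathéodory function `f : [0,T] × U → ℝ`
(measurable in `t`, continuous in `u`) by piecewise functions
`f_m(t,u) = Σ_{l=0}^m 1_{D_{l,m}}(t) c_l(u)` built from a sequence `(c_l)` of
continuous functions with `c₀ ≡ 0` and finite Borel partitions `(D_{l,m})_{0≤l≤m}`
of `[0,T]`:
(1) `sup_u |f(t,u) − f_m(t,u)| = min_{0≤k≤m} sup_u |f(t,u) − c_k(u)| → 0` for every `t`;
(2) `sup_u |f_m(t,u)| ≤ 2 sup_u |f(t,u)|` for every `t` and `m`. -/
theorem caratheodory_piecewise_approximation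
    (T : ℝ) (hT : 0 < T)
    (U : Type*) [MetricSpace U] [CompactSpace U] [Nonempty U]
    (f : ↥(Set.Icc (0:ℝ) T) × U → ℝ)
    (hbdd : ∃ C, ∀ p, |f p| ≤ C)
    (hmeas : ∀ u : U, Measurable fun t : ↥(Set.Icc (0:ℝ) T) => f (t, u))
    (hcont : ∀ t : ↥(Set.Icc (0:ℝ) T), Continuous fun u : U => f (t, u)) :
    ∃ c : ℕ → C(U, ℝ), c 0 = 0 ∧
      ∃ D : (m : ℕ) → Fin (m + 1) → Set (↥(Set.Icc (0:ℝ) T)),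
        (∀ m l, MeasurableSet (D m l)) ∧
        (∀ m, Pairwise fun l l' => Disjoint (D m l) (D m l')) ∧
        (∀ m, (⋃ l, D m l) = Set.univ) ∧
        -- (1) the sup-distance to `f_m` realizes the minimum over `k ≤ m` ...
        (∀ m, ∀ t : ↥(Set.Icc (0:ℝ) T),
          (⨆ u : U, |f (t, u) - ∑ l : Fin (m + 1),
              (D m l).indicator (fun _ => c (l : ℕ) u) t|)
            = ⨅ k : Fin (m + 1), ⨆ u : U, |f (t, u) - c (k : ℕ) u|) ∧
        -- ... and tends to `0` as `m → ∞`, for every `t`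
        (∀ t : ↥(Set.Icc (0:ℝ) T),
          Tendsto (fun m => ⨆ u : U, |f (t, u) - ∑ l : Fin (m + 1),
              (D m l).indicator (fun _ => c (l : ℕ) u) t|) atTop (𝓝 0)) ∧
        -- (2) uniform bound
        (∀ m, ∀ t : ↥(Set.Icc (0:ℝ) T),
          (⨆ u : U, |∑ l : Fin (m + 1), (D m l).indicator (fun _ => c (l : ℕ) u) t|)
            ≤ 2 * ⨆ u : U, |f (t, u)|) :=
  caratheodory_piecewise_approximation_general T U f hmeas hcont
end

section
/- Let a > 0, c ∈ ℝ, t_k ∈ ℝ, and α_k > 0. Define, for t ≤ t_k, α(t) = 2a α_k e^{−2a(t − t_k)} / (2a + c² α_k (e^{−2a(t − t_k)} − 1)). Then the denominator 2a + c² α_k (e^{−2a(t−t_k)} − 1) is strictly positive for all t ≤ t_k, α(t_k) = α_k, and α solves the Riccati ordinary differential equation α′(t) + 2a α(t) − c² α(t)² = 0 for t < t_k. -/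
/-!
The reciprocal `β = 1/α` turns the Riccati equation `α' = c²α² − 2aα` into the linear equation
`β' = 2aβ − c²` (Bernoulli substitution), whose solution through `β(t_k) = 1/α_k` is
`β(t) = (1/α_k − c²/(2a)) e^{2a(t−t_k)} + c²/(2a)`; the explicit formula is exactly `1/β`.
For `t ≤ t_k` the exponential in the denominator is at least `1`, which makes it positive.
-/

open Real

theorem HasDerivAt.inv_of_linear {β : ℝ → ℝ} {p q t : ℝ}
    (hβ : HasDerivAt β (p * β t - q) t) (hne : β t ≠ 0) :
    HasDerivAt (fun s => (β s)⁻¹) (q * (β t)⁻¹ ^ 2 - p * (β t)⁻¹) t :=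
  (hβ.inv hne).congr_deriv (by field_simp; ring)

theorem hasDerivAt_exp_linear_add_const (C p q s t : ℝ) (hp : p ≠ 0) :
    HasDerivAt (fun t => C * exp (p * (t - s)) + q / p)
      (p * (C * exp (p * (t - s)) + q / p) - q) t := by
  have hexp : HasDerivAt (fun t => exp (p * (t - s))) (exp (p * (t - s)) * p) t :=
    (((hasDerivAt_id t).sub_const s).const_mul p).exp.congr_deriv (by simp)
  exact ((hexp.const_mul C).add_const (q / p)).congr_deriv (by field_simp; ring)

theorem riccati_solution_inv_eq (a c s α_k t : ℝ) (ha : a ≠ 0) (hαk : α_k ≠ 0) :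
    (1 / α_k - c ^ 2 / (2 * a)) * exp (2 * a * (t - s)) + c ^ 2 / (2 * a) =
      (2 * a + c ^ 2 * α_k * (exp (-(2 * a) * (t - s)) - 1)) /
        (2 * a * α_k * exp (-(2 * a) * (t - s))) := by
  have hinv : exp (2 * a * (t - s)) = (exp (-(2 * a) * (t - s)))⁻¹ := by
    rw [← exp_neg]; ring_nf
  rw [hinv]
  field_simp
  ring

/-- The explicit solution of the Riccati ODE `α′ + 2aα − c²α² = 0` with terminal
condition `α(t_k) = α_k > 0`: for `t ≤ t_k`, the denominator
`2a + c²α_k(e^{−2a(t−t_k)} − 1)` is strictly positive, `α(t_k) = α_k`, and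
`α(t) = 2aα_k e^{−2a(t−t_k)} / (2a + c²α_k(e^{−2a(t−t_k)} − 1))` satisfies the ODE
for `t < t_k`. -/
theorem riccati_explicit_solution
    (a c t_k α_k : ℝ) (ha : 0 < a) (hαk : 0 < α_k)
    (α : ℝ → ℝ)
    (hα : ∀ t, α t = 2 * a * α_k * Real.exp (-(2 * a) * (t - t_k)) /
      (2 * a + c ^ 2 * α_k * (Real.exp (-(2 * a) * (t - t_k)) - 1))) :
    (∀ t ≤ t_k, 0 < 2 * a + c ^ 2 * α_k * (Real.exp (-(2 * a) * (t - t_k)) - 1)) ∧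
    α t_k = α_k ∧
    (∀ t < t_k, HasDerivAt α (c ^ 2 * (α t) ^ 2 - 2 * a * α t) t) := by
  set β : ℝ → ℝ := fun t => (1 / α_k - c ^ 2 / (2 * a)) * exp (2 * a * (t - t_k)) + c ^ 2 / (2 * a)
  have hden : ∀ t ≤ t_k, 0 < 2 * a + c ^ 2 * α_k * (exp (-(2 * a) * (t - t_k)) - 1) := by
    intro t ht
    have hexp : 1 ≤ exp (-(2 * a) * (t - t_k)) := one_le_exp (by nlinarith)
    have : 0 ≤ c ^ 2 * α_k * (exp (-(2 * a) * (t - t_k)) - 1) := by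
      have := sub_nonneg.2 hexp
      positivity
    linarith
  have hβ : ∀ t, β t = (2 * a + c ^ 2 * α_k * (exp (-(2 * a) * (t - t_k)) - 1)) /
      (2 * a * α_k * exp (-(2 * a) * (t - t_k))) :=
    fun t => riccati_solution_inv_eq a c t_k α_k t ha.ne' hαk.ne'
  have hαβ : α = fun t => (β t)⁻¹ := by
    ext t
    rw [hα, hβ, inv_div]
  refine ⟨hden, by simp [hα, ha.ne'], fun t ht => ?_⟩
  have hβ_pos : 0 < β t := hβ t ▸ div_pos (hden t ht.le) (by positivity)
  rw [hαβ]
  exact (hasDerivAt_exp_linear_add_const _ (2 * a) (c ^ 2) t_k t (by positivity)).inv_of_linear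
    hβ_pos.ne'
end
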